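/- Let (A₁,…,Aₙ) be N×N complex matrices, let λ ∈ σ(A₁) with λ ≠ 0, and suppose the regularity condition (a) holds at λ. Then the algebraic multiplicity of λ as an eigenvalue of A₁ equals M_λ = ∑_{j∈I_λ} mⱼ, the sum of the multiplicities in the determinantal factorization of the irreducible components passing through (1/λ,0,…,0,1). -/

import Mathlib

open MvPolynomial Matrix Filter Topology Metric

noncomputable section

attribute [local instance] Matrix.linftyOpNormedAddCommGroup Matrix.linftyOpNormedSpace

namespace SpectralPaper

/-- The proper joint spectrum of a tuple of square matrices:
`σ_p(B) = {x : det (∑ i, x i • B i − I) = 0}`. -/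
def properSpec {N : ℕ} {ι : Type*} [Fintype ι] (B : ι → Matrix (Fin N) (Fin N) ℂ) :
    Set (ι → ℂ) :=
  {x | Matrix.det (∑ i, x i • B i - 1) = 0}

/-- The Riesz projection of the matrix `B` associated with the part of the spectrum
inside the circle of radius `δ` centered at `μ`:
`(2πi)⁻¹ ∮_{|w-μ|=δ} (w I − B)⁻¹ dw`. -/
def rieszProj {N : ℕ} (B : Matrix (Fin N) (Fin N) ℂ) (μ : ℂ) (δ : ℝ) :
    Matrix (Fin N) (Fin N) ℂ :=
  (2 * Real.pi * Complex.I)⁻¹ •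
    ∮ w in C(μ, δ), (w • (1 : Matrix (Fin N) (Fin N) ℂ) - B)⁻¹

/-- `δ > 0` and the circle `{|w - μ| ≤ δ}` contains no point of the spectrum of `B`
other than (possibly) `μ` itself. -/
def Separates {N : ℕ} (B : Matrix (Fin N) (Fin N) ℂ) (μ : ℂ) (δ : ℝ) : Prop :=
  0 < δ ∧ ∀ z ∈ spectrum ℂ B, ‖z - μ‖ ≤ δ → z = μ

/-- `S` is the orthogonal projection onto the `μ`-eigenspace of `A`:
it is an idempotent, self-adjoint matrix whose range is exactly the eigenspace. -/
def IsOrthoEigenProj {N : ℕ} (A : Matrix (Fin N) (Fin N) ℂ) (μ : ℂ)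
    (S : Matrix (Fin N) (Fin N) ℂ) : Prop :=
  S * S = S ∧ Sᴴ = S ∧ (∀ v : Fin N → ℂ, A *ᵥ (S *ᵥ v) = μ • (S *ᵥ v)) ∧
    (∀ v : Fin N → ℂ, A *ᵥ v = μ • v → S *ᵥ v = v)

/-- The `ℓ²`-operator norm of a matrix, i.e. the norm of the induced operator on
Euclidean space. -/
def opNorm {N : ℕ} (A : Matrix (Fin N) (Fin N) ℂ) : ℝ :=
  ‖Matrix.toEuclideanCLM (𝕜 := ℂ) A‖

end SpectralPaper
namespace SpectralPaper

section Tuple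

variable {N k s : ℕ}

/-- The pencil `x₁ A₁ + x₂ A₂ + ⋯ + xₙ Aₙ` evaluated at `x₁ = x1` and
`(x₂, …, xₙ) = xh` (here `n = k + 1`). -/
def pencilAt (A : Fin (k + 1) → Matrix (Fin N) (Fin N) ℂ) (x1 : ℂ) (xh : Fin k → ℂ) :
    Matrix (Fin N) (Fin N) ℂ :=
  x1 • A 0 + ∑ l : Fin k, xh l • A l.succ

/-- `det(x₁A₁ + ⋯ + xₙAₙ − x_{n+1} I)` as a multivariate polynomial in the
`n + 1 = k + 2` variables `x₁, …, x_{n+1}`. -/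
def pencilPoly (A : Fin (k + 1) → Matrix (Fin N) (Fin N) ℂ) :
    MvPolynomial (Fin (k + 2)) ℂ :=
  Matrix.det
    ((∑ i : Fin (k + 1), (X i.castSucc : MvPolynomial (Fin (k + 2)) ℂ) • (A i).map C) -
      (X (Fin.last (k + 1)) : MvPolynomial (Fin (k + 2)) ℂ) • 1)

/-- `det(x₁A₁ + ⋯ + xₙAₙ − x_{n+1}I) = c ∏ Rⱼ^{mⱼ}` with `Rⱼ` pairwise
non-proportional irreducible homogeneous polynomials. -/
def IsDetFactorization (A : Fin (k + 1) → Matrix (Fin N) (Fin N) ℂ)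
    (R : Fin s → MvPolynomial (Fin (k + 2)) ℂ) (m : Fin s → ℕ) (c : ℂ) : Prop :=
  c ≠ 0 ∧ pencilPoly A = MvPolynomial.C c * ∏ j, R j ^ m j ∧
    (∀ j, Irreducible (R j)) ∧ (∀ j, ∃ d, (R j).IsHomogeneous d) ∧
    (∀ i j, i ≠ j → ∀ t : ℂ, R i ≠ t • R j)

/-- The point `(1/λ, 0, …, 0, 1) ∈ ℂ^{n+1}`. -/
def ptLam (k : ℕ) (lam : ℂ) : Fin (k + 2) → ℂ :=
  Fin.cons lam⁻¹ (Fin.snoc 0 1)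

/-- The point `(1, 0, …, 0) ∈ ℂ^{n+1}`. -/
def pt0 (k : ℕ) : Fin (k + 2) → ℂ :=
  Fin.cons 1 0

/-- `I_λ`: the set of indices of components passing through `(1/λ, 0, …, 0, 1)`. -/
def Ilam (R : Fin s → MvPolynomial (Fin (k + 2)) ℂ) (lam : ℂ) : Set (Fin s) :=
  {j | eval (ptLam k lam) (R j) = 0}

/-- `I₀`: the set of indices of components passing through `(1, 0, …, 0)`. -/
def I0 (R : Fin s → MvPolynomial (Fin (k + 2)) ℂ) : Set (Fin s) :=
  {j | eval (pt0 k) (R j) = 0}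

/-- Regularity condition (a) at `λ ≠ 0`: `∂Rⱼ/∂x₁(1/λ,0,…,0,1) ≠ 0` for `j ∈ I_λ`. -/
def CondA (R : Fin s → MvPolynomial (Fin (k + 2)) ℂ) (lam : ℂ) : Prop :=
  ∀ j ∈ Ilam R lam, eval (ptLam k lam) (pderiv 0 (R j)) ≠ 0

/-- Regularity condition (b) at `λ ≠ 0`: for `i ≠ j` in `I_λ` the gradient vectors
`(∂R/∂x₁, …, ∂R/∂xₙ)` of `R_i` and `R_j` at `(1/λ,0,…,0,1)` are not proportional. -/
def CondB (R : Fin s → MvPolynomial (Fin (k + 2)) ℂ) (lam : ℂ) : Prop :=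
  ∀ i ∈ Ilam R lam, ∀ j ∈ Ilam R lam, i ≠ j →
    ¬∃ t : ℂ,
      (∀ l : Fin (k + 1),
        eval (ptLam k lam) (pderiv l.castSucc (R i)) =
          t * eval (ptLam k lam) (pderiv l.castSucc (R j))) ∨
      (∀ l : Fin (k + 1),
        eval (ptLam k lam) (pderiv l.castSucc (R j)) =
          t * eval (ptLam k lam) (pderiv l.castSucc (R i)))

/-- Regularity condition (ã) at `λ = 0`: `∂Rⱼ/∂x_{n+1}(1,0,…,0) ≠ 0` for `j ∈ I₀`. -/
def CondA0 (R : Fin s → MvPolynomial (Fin (k + 2)) ℂ) : Prop :=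
  ∀ j ∈ I0 R, eval (pt0 k) (pderiv (Fin.last (k + 1)) (R j)) ≠ 0

/-- Regularity condition (b̃) at `λ = 0`: for `i ≠ j` in `I₀` the gradient vectors
`(∂R/∂x₂, …, ∂R/∂x_{n+1})` of `R_i` and `R_j` at `(1,0,…,0)` are not proportional. -/
def CondB0 (R : Fin s → MvPolynomial (Fin (k + 2)) ℂ) : Prop :=
  ∀ i ∈ I0 R, ∀ j ∈ I0 R, i ≠ j →
    ¬∃ t : ℂ,
      (∀ l : Fin (k + 1),
        eval (pt0 k) (pderiv l.succ (R i)) = t * eval (pt0 k) (pderiv l.succ (R j))) ∨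
      (∀ l : Fin (k + 1),
        eval (pt0 k) (pderiv l.succ (R j)) = t * eval (pt0 k) (pderiv l.succ (R i)))

/-- The family of implicit functions `x_{1,λ,j}` near the point `(1/λ, 0, …, 0, 1)`:
for `j ∈ I_λ`, `x_{1,λ,j}` is analytic at `0`, `x_{1,λ,j}(0) = 1/λ` and
`R_j(x_{1,λ,j}(x̂), x̂, 1) = 0` near `0`. -/
def ImplicitFamilyLam (R : Fin s → MvPolynomial (Fin (k + 2)) ℂ) (lam : ℂ)
    (x1f : Fin s → (Fin k → ℂ) → ℂ) : Prop :=
  ∀ j ∈ Ilam R lam, AnalyticAt ℂ (x1f j) 0 ∧ x1f j 0 = lam⁻¹ ∧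
    ∀ᶠ xh in 𝓝 (0 : Fin k → ℂ),
      eval (Fin.cons (x1f j xh) (Fin.snoc xh 1)) (R j) = 0

/-- The family of implicit functions `x_{n+1,0,j}` near the point `(1, 0, …, 0)`:
for `j ∈ I₀`, `x_{n+1,0,j}` is analytic at `0`, `x_{n+1,0,j}(0) = 0` and
`R_j(1, x̂, x_{n+1,0,j}(x̂)) = 0` near `0`. -/
def ImplicitFamily0 (R : Fin s → MvPolynomial (Fin (k + 2)) ℂ)
    (xf : Fin s → (Fin k → ℂ) → ℂ) : Prop :=
  ∀ j ∈ I0 R, AnalyticAt ℂ (xf j) 0 ∧ xf j 0 = 0 ∧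
    ∀ᶠ xh in 𝓝 (0 : Fin k → ℂ),
      eval (Fin.cons 1 (Fin.snoc xh (xf j xh))) (R j) = 0

/-- `x̂` is non-tangential: for every `i ≠ j` in the index set,
`∑_l (∂f_i/∂x_l(0) − ∂f_j/∂x_l(0)) x̂_l ≠ 0`. -/
def NonTangential (Iset : Set (Fin s)) (f : Fin s → (Fin k → ℂ) → ℂ)
    (xh : Fin k → ℂ) : Prop :=
  ∀ i ∈ Iset, ∀ j ∈ Iset, i ≠ j →
    ∑ l : Fin k,
      (fderiv ℂ (f i) 0 (Pi.single l 1) - fderiv ℂ (f j) 0 (Pi.single l 1)) * xh l ≠ 0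

end Tuple

end SpectralPaper
namespace SpectralPaper


private def specVec (k : ℕ) : Fin (k + 2) → Polynomial ℂ :=
  Fin.cons Polynomial.X (Fin.snoc 0 1)

private lemma eval_specVec (k : ℕ) (x : ℂ) (i : Fin (k + 2)) :
    Polynomial.eval x (specVec k i) =
      (Fin.cons x (Fin.snoc (0 : Fin k → ℂ) (1 : ℂ)) : Fin (k + 2) → ℂ) i := by
  refine Fin.cases ?_ (fun j => ?_) i
  · simp [specVec]
  · refine Fin.lastCases ?_ (fun l => ?_) j <;>
      simp [specVec, ← Fin.succ_last, Fin.cons_succ, Fin.snoc_castSucc]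

private lemma derivative_specVec (k : ℕ) (i : Fin (k + 2)) :
    Polynomial.derivative (specVec k i) = if i = 0 then 1 else 0 := by
  refine Fin.cases ?_ (fun j => ?_) i
  · simp [specVec]
  · rw [if_neg (Fin.succ_ne_zero j)]
    refine Fin.lastCases ?_ (fun l => ?_) j <;>
      simp [specVec, ← Fin.succ_last, Fin.cons_succ, Fin.snoc_castSucc]

private lemma aeval_specVec_eval {k : ℕ} (x : ℂ) (P : MvPolynomial (Fin (k + 2)) ℂ) :
    Polynomial.eval x (MvPolynomial.aeval (specVec k) P) =
      MvPolynomial.eval (Fin.cons x (Fin.snoc (0 : Fin k → ℂ) (1 : ℂ)) : Fin (k + 2) → ℂ) P := by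
  have h := MvPolynomial.comp_aeval_apply (Polynomial.aeval x) (f := specVec k) P
  simp only [Polynomial.coe_aeval_eq_eval] at h
  rw [h]
  have hw : (fun i => Polynomial.eval x (specVec k i)) =
      (Fin.cons x (Fin.snoc (0 : Fin k → ℂ) (1 : ℂ)) : Fin (k + 2) → ℂ) :=
    funext (eval_specVec k x)
  rw [hw]
  exact DFunLike.congr_fun
    (MvPolynomial.coe_aeval_eq_eval
      (f := (Fin.cons x (Fin.snoc (0 : Fin k → ℂ) (1 : ℂ)) : Fin (k + 2) → ℂ))) P

private lemma derivative_mvaeval {n : ℕ} (v : Fin n → Polynomial ℂ)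
    (P : MvPolynomial (Fin n) ℂ) :
    Polynomial.derivative (MvPolynomial.aeval v P) =
      ∑ i, MvPolynomial.aeval v (MvPolynomial.pderiv i P) * Polynomial.derivative (v i) := by
  induction P using MvPolynomial.induction_on with
  | C a => simp
  | add p q hp hq => simp [hp, hq, add_mul, Finset.sum_add_distrib]
  | mul_X p i hp =>
      have key : ∀ t : Fin n, MvPolynomial.pderiv t (p * MvPolynomial.X i) =
          MvPolynomial.pderiv t p * MvPolynomial.X i + (if t = i then p else 0) := by
        intro t
        rw [MvPolynomial.pderiv_mul, MvPolynomial.pderiv_X, Pi.single_apply]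
        by_cases h : i = t <;> simp [h, eq_comm]
      have lhs : (MvPolynomial.aeval v) (p * MvPolynomial.X i) =
          (MvPolynomial.aeval v) p * v i := by simp
      rw [lhs, Polynomial.derivative_mul, hp, Finset.sum_mul]
      simp only [key, _root_.map_add, _root_.map_mul, MvPolynomial.aeval_X, add_mul,
        Finset.sum_add_distrib, apply_ite (MvPolynomial.aeval v), _root_.map_zero, ite_mul,
        zero_mul, Finset.sum_ite_eq', Finset.mem_univ, if_true]
      rw [add_left_inj]
      exact Finset.sum_congr rfl fun t _ => by ring

private lemma eval_detPoly {N : ℕ} (B : Matrix (Fin N) (Fin N) ℂ) (x : ℂ) :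
    Polynomial.eval x (Matrix.det ((Polynomial.X : Polynomial ℂ) • B.map Polynomial.C - 1)) =
      Matrix.det (x • B - 1) := by
  rw [← Polynomial.coe_evalRingHom, RingHom.map_det]
  congr 1
  ext i j
  by_cases h : i = j <;>
    simp [h, RingHom.mapMatrix_apply, Matrix.map_apply, Matrix.sub_apply, Matrix.smul_apply,
      Matrix.one_apply, smul_eq_mul] <;> ring

private lemma eval_charpoly' {N : ℕ} (B : Matrix (Fin N) (Fin N) ℂ) (x : ℂ) :
    Polynomial.eval x (Matrix.charpoly B) =
      Matrix.det (x • (1 : Matrix (Fin N) (Fin N) ℂ) - B) := by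
  rw [Matrix.charpoly, ← Polynomial.coe_evalRingHom, RingHom.map_det]
  congr 1
  ext i j
  rcases eq_or_ne i j with h | h <;>
    simp [h, RingHom.mapMatrix_apply, Matrix.charmatrix_apply_eq, Matrix.charmatrix_apply_ne,
      Matrix.one_apply, Matrix.sub_apply, Matrix.smul_apply, smul_eq_mul]

private lemma sum_ite_count (lam : ℂ) (s : Multiset ℂ) :
    (s.map fun r => if r = lam then (1 : ℕ) else 0).sum = s.count lam := by
  induction s using Multiset.induction_on with
  | empty => simp
  | cons a s ih =>
      simp only [Multiset.map_cons, Multiset.sum_cons, ih, Multiset.count_cons]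
      by_cases h : a = lam
      · subst h; simp [add_comm]
      · rw [if_neg h, if_neg (fun hh => h hh.symm)]; simp [add_comm]

open scoped Classical in
private lemma count_key {N : ℕ} (B : Matrix (Fin N) (Fin N) ℂ) {lam : ℂ} (hlam : lam ≠ 0) :
    (Matrix.det ((Polynomial.X : Polynomial ℂ) • B.map Polynomial.C - 1)).rootMultiplicity lam⁻¹ =
      (Matrix.charpoly B).rootMultiplicity lam := by
  set p : Polynomial ℂ := Matrix.charpoly B with hp
  set Q : Polynomial ℂ :=
    Matrix.det ((Polynomial.X : Polynomial ℂ) • B.map Polynomial.C - 1) with hQdef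
  have hmon : p.Monic := Matrix.charpoly_monic B
  have hsplit : p.Splits := IsAlgClosed.splits p
  have hprod : p = (p.roots.map fun r => Polynomial.X - Polynomial.C r).prod :=
    Polynomial.Splits.eq_prod_roots_of_monic hsplit hmon
  have hcard : Multiset.card p.roots = N := by
    rw [Polynomial.splits_iff_card_roots.mp hsplit, hp, Matrix.charpoly_natDegree_eq_dim,
      Fintype.card_fin]
  have hQ : Q = Polynomial.C ((-1 : ℂ) ^ N) *
      (p.roots.map fun r => 1 - Polynomial.C r * Polynomial.X).prod := by
    apply Polynomial.funext
    intro x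
    have hev : ∀ (y : ℂ) (s : Multiset ℂ) (g : ℂ → Polynomial ℂ),
        Polynomial.eval y ((s.map g).prod) = (s.map fun r => Polynomial.eval y (g r)).prod := by
      intro y s g
      rw [← Polynomial.coe_evalRingHom, map_multiset_prod, Multiset.map_map]
      rfl
    rw [hQdef, eval_detPoly, Polynomial.eval_mul, Polynomial.eval_C, hev]
    simp only [Polynomial.eval_sub, Polynomial.eval_one, Polynomial.eval_mul, Polynomial.eval_C,
      Polynomial.eval_X]
    by_cases hx : x = 0
    · subst hx
      simp [Matrix.det_neg, Multiset.map_const', hcard]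
    · have h1 : x • B - 1 = x • (B - x⁻¹ • (1 : Matrix (Fin N) (Fin N) ℂ)) := by
        rw [smul_sub, smul_smul, mul_inv_cancel₀ hx, one_smul]
      have h2 : B - x⁻¹ • (1 : Matrix (Fin N) (Fin N) ℂ) =
          -(x⁻¹ • (1 : Matrix (Fin N) (Fin N) ℂ) - B) := (neg_sub _ _).symm
      rw [h1, Matrix.det_smul, Fintype.card_fin, h2, Matrix.det_neg, Fintype.card_fin,
        ← eval_charpoly', ← hp]
      have h3 : Polynomial.eval x⁻¹ p = (p.roots.map fun r => x⁻¹ - r).prod := by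
        conv_lhs => rw [hprod]
        rw [hev]
        simp
      rw [h3]
      have h4 : (p.roots.map fun r => (1 : ℂ) - r * x).prod =
          x ^ N * (p.roots.map fun r => x⁻¹ - r).prod := by
        have hmc : (p.roots.map fun r => (1 : ℂ) - r * x) =
            (p.roots.map fun r => x * (x⁻¹ - r)) := by
          apply Multiset.map_congr rfl
          intro r _
          field_simp
        rw [hmc]
        have := Multiset.prod_map_mul (m := p.roots) (f := fun _ => x) (g := fun r => x⁻¹ - r)
        rw [this, Multiset.map_const', Multiset.prod_replicate, hcard]
      rw [h4]
      ring
  have hfne : ∀ r : ℂ, (1 - Polynomial.C r * Polynomial.X : Polynomial ℂ) ≠ 0 := by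
    intro r h
    have h0 : Polynomial.eval 0 (1 - Polynomial.C r * Polynomial.X : Polynomial ℂ) = 0 := by
      rw [h]; simp
    simp at h0
  have hroots : Q.roots =
      (p.roots.map fun r => (1 - Polynomial.C r * Polynomial.X : Polynomial ℂ)).bind
        Polynomial.roots := by
    rw [hQ, Polynomial.roots_C_mul _ (pow_ne_zero _ (by norm_num : (-1 : ℂ) ≠ 0)),
      Polynomial.roots_multiset_prod]
    intro h
    obtain ⟨r, _, hr⟩ := Multiset.mem_map.mp h
    exact hfne r hr
  have hcount : ∀ r : ℂ,
      ((1 - Polynomial.C r * Polynomial.X : Polynomial ℂ).roots).count lam⁻¹ =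
        if r = lam then 1 else 0 := by
    intro r
    by_cases hr : r = lam
    · subst hr
      rw [if_pos rfl]
      have hfac : (1 - Polynomial.C r * Polynomial.X : Polynomial ℂ) =
          Polynomial.C (-r) * (Polynomial.X - Polynomial.C r⁻¹) := by
        rw [mul_sub, ← Polynomial.C_mul, neg_mul, mul_inv_cancel₀ hlam]
        simp only [_root_.map_neg, _root_.map_one]
        ring
      rw [hfac, Polynomial.roots_C_mul _ (neg_ne_zero.mpr hlam), Polynomial.roots_X_sub_C]
      simp
    · rw [if_neg hr, Polynomial.count_roots]
      apply Polynomial.rootMultiplicity_eq_zero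
      intro hroot
      simp only [Polynomial.IsRoot, Polynomial.eval_sub, Polynomial.eval_one,
        Polynomial.eval_mul, Polynomial.eval_C, Polynomial.eval_X, sub_eq_zero] at hroot
      apply hr
      have h5 := hroot.symm
      field_simp at h5
      exact h5
  rw [← Polynomial.count_roots, hroots, Multiset.count_bind, Multiset.map_map]
  simp only [Function.comp, hcount]
  rw [sum_ite_count, Polynomial.count_roots]

private lemma aeval_pencilPoly {N k : ℕ} (A : Fin (k + 1) → Matrix (Fin N) (Fin N) ℂ) :
    MvPolynomial.aeval (specVec k) (pencilPoly A) =
      Matrix.det ((Polynomial.X : Polynomial ℂ) • (A 0).map Polynomial.C - 1) := by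
  rw [pencilPoly, AlgHom.map_det]
  congr 1
  ext i j
  have h0 : specVec k ((0 : Fin (k + 1)).castSucc) = Polynomial.X := by
    rw [Fin.castSucc_zero]
    simp [specVec]
  have hlast : specVec k (Fin.last (k + 1)) = 1 := by
    rw [← Fin.succ_last]
    simp only [specVec, Fin.cons_succ, Fin.snoc_last]
  have hmid : ∀ l : Fin k, specVec k ((l.succ).castSucc) = 0 := by
    intro l
    rw [← Fin.succ_castSucc]
    simp only [specVec, Fin.cons_succ, Fin.snoc_castSucc]
    rfl
  simp only [AlgHom.mapMatrix_apply, Matrix.map_apply, Matrix.sub_apply, Matrix.sum_apply,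
    Matrix.smul_apply, smul_eq_mul, _root_.map_sub, _root_.map_sum, _root_.map_mul,
    MvPolynomial.aeval_X, MvPolynomial.aeval_C, Matrix.one_apply,
    apply_ite (MvPolynomial.aeval (specVec k)), _root_.map_one, _root_.map_zero]
  rw [Fin.sum_univ_succ]
  simp only [h0, hlast, hmid, zero_mul, Finset.sum_const_zero, add_zero, one_mul]
  congr 1


open scoped Classical in
/-- **The multiplicity of `λ` equals `M_λ = ∑_{j ∈ I_λ} mⱼ`.**
Let `(A₁, …, Aₙ)` be `N×N` complex matrices, `λ ∈ σ(A₁)`, `λ ≠ 0`, satisfying the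
regularity condition (a) at `λ`.  Then the algebraic multiplicity of `λ` as an
eigenvalue of `A₁` (its multiplicity as a root of the characteristic polynomial)
equals the sum `∑_{j ∈ I_λ} mⱼ` of the multiplicities of the irreducible components
passing through `(1/λ, 0, …, 0, 1)`. -/
theorem multiplicity_eq_sum {N k s : ℕ}
    (A : Fin (k + 1) → Matrix (Fin N) (Fin N) ℂ)
    (R : Fin s → MvPolynomial (Fin (k + 2)) ℂ) (m : Fin s → ℕ) (c : ℂ)
    (hfact : IsDetFactorization A R m c)
    (lam : ℂ) (hlam : lam ∈ spectrum ℂ (A 0)) (hlam0 : lam ≠ 0)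
    (ha : CondA R lam) :
    (Matrix.charpoly (A 0)).rootMultiplicity lam =
      ∑ j : Fin s, if j ∈ Ilam R lam then m j else 0 := by
  classical
  obtain ⟨hc, hfac, hirr, hhom, hnp⟩ := hfact
  set Q : Polynomial ℂ :=
    Matrix.det ((Polynomial.X : Polynomial ℂ) • (A 0).map Polynomial.C - 1) with hQdef
  have hQ : MvPolynomial.aeval (specVec k) (pencilPoly A) = Q := aeval_pencilPoly A
  set q : Fin s → Polynomial ℂ := fun j => MvPolynomial.aeval (specVec k) (R j) with hq
  have hQfact : Q = Polynomial.C c * ∏ j, q j ^ m j := by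
    rw [← hQ, hfac]
    simp only [_root_.map_mul, _root_.map_prod, _root_.map_pow, MvPolynomial.aeval_C,
      Polynomial.algebraMap_eq]
    rfl
  have hQ0 : Polynomial.eval 0 Q = (-1 : ℂ) ^ N := by
    rw [hQdef, eval_detPoly]
    simp [Matrix.det_neg]
  have hQne : Q ≠ 0 := by
    intro h
    rw [h] at hQ0
    simp only [Polynomial.eval_zero] at hQ0
    exact pow_ne_zero N (by norm_num : (-1 : ℂ) ≠ 0) hQ0.symm
  have heval : ∀ j, Polynomial.eval lam⁻¹ (q j) = MvPolynomial.eval (ptLam k lam) (R j) :=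
    fun j => aeval_specVec_eval lam⁻¹ (R j)
  have hderiv : ∀ j, Polynomial.derivative (q j) =
      MvPolynomial.aeval (specVec k) (MvPolynomial.pderiv 0 (R j)) := by
    intro j
    rw [hq, derivative_mvaeval]
    simp only [derivative_specVec, mul_ite, mul_one, mul_zero, Finset.sum_ite_eq',
      Finset.mem_univ, if_true]
  have hdval : ∀ j, Polynomial.eval lam⁻¹ (Polynomial.derivative (q j)) =
      MvPolynomial.eval (ptLam k lam) (MvPolynomial.pderiv 0 (R j)) := by
    intro j
    rw [hderiv j]
    exact aeval_specVec_eval lam⁻¹ _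
  have hmem : ∀ j, j ∈ Ilam R lam ↔ MvPolynomial.eval (ptLam k lam) (R j) = 0 := by
    intro j; rfl
  have hrm : ∀ j, (q j).rootMultiplicity lam⁻¹ = if j ∈ Ilam R lam then 1 else 0 := by
    intro j
    by_cases hj : j ∈ Ilam R lam
    · rw [if_pos hj]
      have hne : q j ≠ 0 := by
        intro h
        apply ha j hj
        rw [← hdval j, h]
        simp
      have hroot : (q j).IsRoot lam⁻¹ := by
        rw [Polynomial.IsRoot, heval j]
        exact (hmem j).mp hj
      have h1 : 0 < (q j).rootMultiplicity lam⁻¹ :=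
        (Polynomial.rootMultiplicity_pos hne).mpr hroot
      have h2 : ¬ 1 < (q j).rootMultiplicity lam⁻¹ := by
        rw [Polynomial.one_lt_rootMultiplicity_iff_isRoot hne]
        rintro ⟨-, hd⟩
        exact ha j hj (by rw [← hdval j]; exact hd)
      omega
    · rw [if_neg hj]
      apply Polynomial.rootMultiplicity_eq_zero
      rw [Polynomial.IsRoot, heval j]
      exact fun h => hj ((hmem j).mpr h)
  have hprodne : (∏ j, q j ^ m j) ≠ 0 := by
    intro h
    exact hQne (by rw [hQfact, h, mul_zero])
  have hcount : Q.rootMultiplicity lam⁻¹ = ∑ j, m j * ((q j).rootMultiplicity lam⁻¹) := by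
    rw [← Polynomial.count_roots, hQfact,
      Polynomial.roots_C_mul _ hc,
      Polynomial.roots_prod (fun j => q j ^ m j) Finset.univ hprodne,
      Multiset.count_bind]
    simp only [Polynomial.roots_pow, Multiset.count_nsmul, Polynomial.count_roots]
    rfl
  rw [← count_key (A 0) hlam0, ← hQdef, hcount]
  refine Finset.sum_congr rfl fun j _ => ?_
  rw [hrm j]
  by_cases hj : j ∈ Ilam R lam
  · simp [hj]
  · simp [hj]

end SpectralPaper
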